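/- arXiv:1603.01977 — 5 statements merged into one kernel-verified Lean document; each statement's English description precedes it below -/
import Mathlib

section
/- Let A = {F₁, F₂, …} be a countable set of label decoders, τ an admissible pairing (surjective onto ℕ² with every fiber infinite), and ≺ a linear order on graphs. Define the diagonalization class C_A to contain, for each n in the domain of τ, the ≺-smallest graph on n vertices not in gr(S_{τ(n)}) (if one exists), where S_{(y,z)} = (F_y, z). Then C_A is not represented by any labeling scheme (F_y, z) with F_y ∈ A and z ∈ ℕ; that is, C_A ∉ G A. -/
/-- A label decoder is a binary relation on bit strings. -/
def LabelDecoder := List Bool → List Bool → Prop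

/-- `G ∈ gr(S)` for the labeling scheme `S = (F, c)`. -/
def InGr (F : LabelDecoder) (c n : ℕ) (G : SimpleGraph (Fin n)) : Prop :=
  ∃ ℓ : Fin n → List Bool,
    (∀ v, (ℓ v).length = c * Nat.clog 2 n) ∧
    ∀ u v, G.Adj u v ↔ F (ℓ u) (ℓ v)

/-- An (unlabeled) graph: a number of vertices together with a graph on them. -/
def UGraph := (n : ℕ) × SimpleGraph (Fin n)

/-!
A labeling scheme `(F, c)` assigns labels of `c ⌈log₂ n⌉` bits to `n` vertices, so it spans at
most `2 ^ (c ⌈log₂ n⌉ n)` graphs on `Fin n`, fewer than the `2 ^ (n choose 2)` graphs there are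
once `n` is large. If `C ⊆ gr(F_y, z)`, pick such a large `n` in the infinite fiber of `τ` over
`(y, z)`: the `≺`-least graph on `n` vertices outside `gr(F_y, z)` exists and lies in `C`.
-/

open Filter SimpleGraph

lemma two_pow_choose_two_le_card_simpleGraph (V : Type*) [Fintype V] :
    2 ^ (Fintype.card V).choose 2 ≤ Nat.card (SimpleGraph V) := by
  classical
  have hinj : Function.Injective
      fun s : Set {e : Sym2 V // ¬ e.IsDiag} => fromEdgeSet (Subtype.val '' s) := by
    intro s t hst
    have hdiag (s : Set {e : Sym2 V // ¬ e.IsDiag}) :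
        Subtype.val '' s \ Sym2.diagSet = Subtype.val '' s :=
      sdiff_eq_left.mpr <| Set.disjoint_left.mpr <| by
        rintro _ ⟨e, -, rfl⟩
        exact e.2
    have := congrArg edgeSet hst
    simp only [edgeSet_fromEdgeSet, hdiag] at this
    exact Subtype.val_injective.image_injective this
  calc 2 ^ (Fintype.card V).choose 2 = Nat.card (Set {e : Sym2 V // ¬ e.IsDiag}) := by
        rw [Nat.card_eq_fintype_card, Fintype.card_set, Sym2.card_subtype_not_diag]
    _ ≤ Nat.card (SimpleGraph V) := Nat.card_le_card_of_injective _ hinj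

lemma card_inGr_le (F : LabelDecoder) (c n : ℕ) :
    Nat.card {G : SimpleGraph (Fin n) // InGr F c n G} ≤ 2 ^ (c * Nat.clog 2 n * n) := by
  choose ℓ hlen hadj using fun G : {G : SimpleGraph (Fin n) // InGr F c n G} => G.2
  have hinj : Function.Injective
      fun G v => (⟨ℓ G v, hlen G v⟩ : List.Vector Bool (c * Nat.clog 2 n)) := by
    intro G H hGH
    have hℓ : ℓ G = ℓ H := funext fun v => congrArg Subtype.val (congrFun hGH v)
    ext u v
    rw [hadj G, hadj H, hℓ]
  calc Nat.card {G : SimpleGraph (Fin n) // InGr F c n G}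
      ≤ Nat.card (Fin n → List.Vector Bool (c * Nat.clog 2 n)) :=
        Nat.card_le_card_of_injective _ hinj
    _ = 2 ^ (c * Nat.clog 2 n * n) := by simp [Nat.card_eq_fintype_card, pow_mul]

lemma exists_not_inGr (F : LabelDecoder) {c n : ℕ} (h : c * Nat.clog 2 n * n < n.choose 2) :
    ∃ G : SimpleGraph (Fin n), ¬ InGr F c n G := by
  by_contra! hall
  have hcard : Nat.card (SimpleGraph (Fin n)) ≤ 2 ^ (c * Nat.clog 2 n * n) := by
    rw [← Nat.card_congr (Equiv.subtypeUnivEquiv hall)]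
    exact card_inGr_le F c n
  have := (two_pow_choose_two_le_card_simpleGraph (Fin n)).trans hcard
  rw [Fintype.card_fin, Nat.pow_le_pow_iff_right one_lt_two] at this
  omega

lemma eventually_mul_lt_two_pow (a : ℕ) : ∀ᶠ m in atTop, a * m < 2 ^ m := by
  refine eventually_atTop.mpr ⟨2 * a, fun m hm => ?_⟩
  induction m, hm using Nat.le_induction with
  | base => nlinarith [Nat.two_mul_sq_add_one_le_two_pow_two_mul a]
  | succ m hm ih => rw [pow_succ]; nlinarith [m.lt_two_pow_self]

lemma tendsto_clog_two_atTop : Tendsto (Nat.clog 2) atTop atTop :=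
  tendsto_atTop_atTop.mpr fun k =>
    ⟨2 ^ k, fun _ hn => (Nat.clog_pow 2 k one_lt_two).symm.le.trans (Nat.clog_mono_right 2 hn)⟩

lemma eventually_mul_clog_mul_lt_choose_two (c : ℕ) :
    ∀ᶠ n in atTop, c * Nat.clog 2 n * n < n.choose 2 := by
  filter_upwards [tendsto_clog_two_atTop.eventually (eventually_mul_lt_two_pow (4 * c)),
    tendsto_clog_two_atTop.eventually_ge_atTop 1, eventually_ge_atTop 2] with n hlt hpos hn
  have hpow : 2 ^ Nat.clog 2 n ≤ 2 * (n - 1) := by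
    have := Nat.pow_pred_clog_lt_self one_lt_two hn
    rw [← Nat.succ_pred_eq_of_pos hpos, pow_succ]
    omega
  have hchoose : n.choose 2 * 2 = n * (n - 1) := by
    rw [Nat.choose_two_right, Nat.div_mul_cancel (Nat.even_mul_pred_self n).two_dvd]
  nlinarith

/-- The order is an explicit argument since `SimpleGraph V` already carries its lattice order. -/
lemma LinearOrder.exists_minimal_of_finite {α : Type*} [Finite α] (o : LinearOrder α)
    {P : α → Prop} (h : ∃ a, P a) : ∃ a, P a ∧ ∀ b, P b → ¬ o.lt b a := by
  let := o
  obtain ⟨a, ha⟩ := exists_minimal_of_wellFoundedLT P h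
  exact ⟨a, ha.prop, fun _ hb => ha.not_lt hb⟩

/-- Diagonalization: let `A = {F₀, F₁, …}` be a countable family of label decoders,
`τ` an admissible pairing (partial, with every fiber over `ℕ²` infinite) and `≺` a family
of linear orders on graphs.  The diagonalization class `C`, containing for each
`n ∈ dom τ` with `τ(n) = (y, z)` the `≺`-smallest graph on `n` vertices not in
`gr(F_y, z)` (if one exists), is not represented by any labeling scheme `(F_y, z)` with
`y, z ∈ ℕ`, i.e. `C ∉ G A`. -/
theorem stmt_4 (F : ℕ → LabelDecoder) (τ : ℕ → Option (ℕ × ℕ))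
    (hτ : ∀ p : ℕ × ℕ, {x : ℕ | τ x = some p}.Infinite)
    (prec : ∀ n : ℕ, LinearOrder (SimpleGraph (Fin n)))
    (C : Set UGraph)
    (hC : ∀ p : UGraph, p ∈ C ↔
      ∃ y z : ℕ, τ p.1 = some (y, z) ∧ ¬ InGr (F y) z p.1 p.2 ∧
        ∀ H : SimpleGraph (Fin p.1), ¬ InGr (F y) z p.1 H → ¬ (prec p.1).lt H p.2) :
    ¬ ∃ y z : ℕ, ∀ p ∈ C, InGr (F y) z p.1 p.2 := by
  rintro ⟨y, z, hyz⟩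
  obtain ⟨n, hn, hcount⟩ := (Nat.frequently_atTop_iff_infinite.mpr (hτ (y, z))).and_eventually
    (eventually_mul_clog_mul_lt_choose_two z) |>.exists
  obtain ⟨G, hG, hGmin⟩ := (prec n).exists_minimal_of_finite (exists_not_inGr (F y) hcount)
  exact hG (hyz ⟨n, G⟩ ((hC _).mpr ⟨y, z, hn, hG, hGmin⟩))
end

section
/- No graph parameter characterizes the set of all graph classes admitting some labeling scheme (G ALL): for every graph parameter λ, either some class bounded by λ has no labeling scheme, or some class with a labeling scheme is unbounded by λ. (Proof via diagonalization: if λ characterized G ALL, the diagonalization class against the countable family {C^λ_{≤i} : i ∈ ℕ} would lie in G ALL yet be unbounded by λ.) -/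
/-- `C ∈ G ALL`: `C` admits some labeling scheme with an arbitrary label decoder. -/
def InGALL (C : Set UGraph) : Prop :=
  ∃ (F : LabelDecoder) (c : ℕ), ∀ p ∈ C, InGr F c p.1 p.2

/-- A graph class is bounded by a graph parameter `lam`. -/
def BoundedBy (lam : UGraph → ℕ) (C : Set UGraph) : Prop :=
  ∃ c : ℕ, ∀ G ∈ C, lam G ≤ c

/-!
If a parameter `lam` characterized `G ALL`, then, since the class of all graphs has no labeling
scheme (there are at least `2 ^ (t * t)` graphs on `2 * t` vertices but only `2 ^ O(t log t)`
labelings), `lam` would be unbounded. As `lam` is bounded on the finitely many graphs of each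
size, we can pick graphs `q i` with more than `i` vertices and `lam (q i) > i`. The class
`{q i}` has a labeling scheme, since a vertex `u` of `q i` can be labelled by the pair `(u, i)`,
both of which fit into `clog 2 |q i|` bits; yet the class is unbounded by `lam`.
-/

def fixedBits (k m : ℕ) : List Bool := List.ofFn fun j : Fin k => m.testBit j

@[simp]
lemma length_fixedBits (k m : ℕ) : (fixedBits k m).length = k := List.length_ofFn

lemma fixedBits_inj {k m m' : ℕ} (hm : m < 2 ^ k) (hm' : m' < 2 ^ k)
    (h : fixedBits k m = fixedBits k m') : m = m' := by
  refine Nat.eq_of_testBit_eq fun j => ?_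
  by_cases hj : j < k
  · exact congrFun (List.ofFn_injective h) ⟨j, hj⟩
  · have hkj : 2 ^ k ≤ 2 ^ j := Nat.pow_le_pow_right two_pos (not_lt.mp hj)
    rw [Nat.testBit_lt_two_pow (hm.trans_le hkj), Nat.testBit_lt_two_pow (hm'.trans_le hkj)]

lemma inGALL_range_of_labels {ι : Type*} (p : ι → UGraph) (c : ℕ)
    (ℓ : ∀ i, Fin (p i).1 → List Bool)
    (hlen : ∀ i u, (ℓ i u).length = c * Nat.clog 2 (p i).1)
    (hinj : ∀ i j u v, ℓ i u = ℓ j v → i = j ∧ (u : ℕ) = v) :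
    InGALL (Set.range p) := by
  refine ⟨fun x y => ∃ i u v, x = ℓ i u ∧ y = ℓ i v ∧ (p i).2.Adj u v, c, ?_⟩
  rintro _ ⟨i, rfl⟩
  refine ⟨ℓ i, hlen i, fun u v => ⟨fun huv => ⟨i, u, v, rfl, rfl, huv⟩, ?_⟩⟩
  rintro ⟨j, u', v', hu, hv, huv⟩
  obtain ⟨rfl, hu⟩ := hinj i j u u' hu
  obtain ⟨-, hv⟩ := hinj i i v v' hv
  rwa [Fin.ext hu, Fin.ext hv]

lemma inGALL_range_of_lt_size (p : ℕ → UGraph) (hp : ∀ i, i < (p i).1) :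
    InGALL (Set.range p) := by
  refine inGALL_range_of_labels p 2
    (fun i u => fixedBits (Nat.clog 2 (p i).1) u ++ fixedBits (Nat.clog 2 (p i).1) i)
    (fun i u => by simp [two_mul]) fun i j u v h => ?_
  -- The label length fixes `k = clog 2 n`, and both fields are below `n ≤ 2 ^ k`.
  have hk : Nat.clog 2 (p i).1 = Nat.clog 2 (p j).1 := by
    simpa [← two_mul] using congrArg List.length h
  have hbound : ∀ {i m}, m < (p i).1 → m < 2 ^ Nat.clog 2 (p i).1 :=
    fun h => h.trans_le (Nat.le_pow_clog one_lt_two _)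
  rw [hk] at h
  obtain ⟨hu, hi⟩ := List.append_inj h (by simp)
  exact ⟨fixedBits_inj (hk ▸ hbound (hp i)) (hbound (hp j)) hi,
    fixedBits_inj (hk ▸ hbound u.isLt) (hbound v.isLt) hu⟩

section Bipartite

variable {α β : Type*}

def bipartiteOfRel (r : α → β → Bool) : SimpleGraph (α ⊕ β) :=
  SimpleGraph.fromRel fun x y => ∃ a b, x = .inl a ∧ y = .inr b ∧ r a b

lemma bipartiteOfRel_adj_inl_inr (r : α → β → Bool) (a : α) (b : β) :
    (bipartiteOfRel r).Adj (.inl a) (.inr b) ↔ r a b := by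
  simp [bipartiteOfRel]

lemma bipartiteOfRel_injective :
    Function.Injective (bipartiteOfRel : (α → β → Bool) → SimpleGraph (α ⊕ β)) :=
  fun r s h => funext₂ fun a b => Bool.coe_iff_coe.mp <| by
    rw [← bipartiteOfRel_adj_inl_inr, h, bipartiteOfRel_adj_inl_inr]

end Bipartite

lemma two_pow_mul_self_le_card_simpleGraph (t : ℕ) :
    2 ^ (t * t) ≤ Fintype.card (SimpleGraph (Fin (t + t))) := by
  have := Fintype.card_le_of_injective _ (finSumFinEquiv.simpleGraph.injective.comp
    (bipartiteOfRel_injective (α := Fin t) (β := Fin t)))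
  simpa [Fintype.card_fun, ← pow_mul] using this

lemma card_simpleGraph_le_of_forall_inGr {F : LabelDecoder} {c n : ℕ}
    (h : ∀ G : SimpleGraph (Fin n), InGr F c n G) :
    Fintype.card (SimpleGraph (Fin n)) ≤ 2 ^ (c * Nat.clog 2 n * n) := by
  choose ℓ hlen hadj using h
  let labels (G : SimpleGraph (Fin n)) (v : Fin n) : List.Vector Bool (c * Nat.clog 2 n) :=
    ⟨ℓ G v, hlen G v⟩
  have hinj : Function.Injective labels := fun G H hGH => by
    ext u v
    have hℓ : ℓ G = ℓ H := funext fun w => congrArg Subtype.val (congrFun hGH w)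
    rw [hadj, hadj, hℓ]
  simpa [Fintype.card_fun, ← pow_mul] using Fintype.card_le_of_injective _ hinj

lemma exists_two_mul_succ_lt_two_pow (c : ℕ) : ∃ m, 2 * c * (m + 1) < 2 ^ m := by
  refine ⟨(4 * c + 4) + (4 * c + 4), ?_⟩
  have := (4 * c + 4).lt_two_pow_self
  rw [pow_add]
  nlinarith

lemma not_inGALL_univ : ¬ InGALL (Set.univ : Set UGraph) := by
  rintro ⟨F, c, hF⟩
  obtain ⟨m, hm⟩ := exists_two_mul_succ_lt_two_pow c
  have hn : 2 ^ m + 2 ^ m = 2 ^ (m + 1) := by rw [pow_succ]; ring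
  have hcard := (two_pow_mul_self_le_card_simpleGraph (2 ^ m)).trans
    (card_simpleGraph_le_of_forall_inGr fun G => hF ⟨_, G⟩ trivial)
  rw [hn, Nat.clog_pow 2 _ one_lt_two, Nat.pow_le_pow_iff_right one_lt_two] at hcard
  have hsq : 2 ^ m * 2 ^ m ≤ 2 ^ m * (2 * c * (m + 1)) := by rw [pow_succ] at hcard; linarith
  exact hm.not_ge (Nat.le_of_mul_le_mul_left hsq (by positivity))

lemma boundedBy_of_finite (lam : UGraph → ℕ) {C : Set UGraph} (hC : C.Finite) :
    BoundedBy lam C :=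
  let ⟨b, hb⟩ := (hC.image lam).bddAbove
  ⟨b, fun _ hG => hb ⟨_, hG, rfl⟩⟩

lemma finite_setOf_size_le (N : ℕ) : {G : UGraph | G.1 ≤ N}.Finite := by
  refine (Set.finite_range fun G : (n : Fin (N + 1)) × SimpleGraph (Fin n) =>
    (⟨G.1, G.2⟩ : UGraph)).subset fun G hG => ?_
  exact ⟨⟨⟨G.1, Nat.lt_succ_of_le hG⟩, G.2⟩, rfl⟩

lemma exists_seq_of_not_boundedBy_univ {lam : UGraph → ℕ}
    (hlam : ¬ BoundedBy lam Set.univ) :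
    ∃ q : ℕ → UGraph, ∀ i, i < (q i).1 ∧ i < lam (q i) := by
  suffices h : ∀ i, ∃ G : UGraph, i < G.1 ∧ i < lam G by
    choose q hq using h
    exact ⟨q, hq⟩
  intro i
  obtain ⟨b, hb⟩ := boundedBy_of_finite lam (finite_setOf_size_le i)
  obtain ⟨G, hG⟩ : ∃ G, max i b < lam G := by
    by_contra! hle
    exact hlam ⟨_, fun G _ => hle G⟩
  rw [max_lt_iff] at hG
  exact ⟨G, lt_of_not_ge fun hle => (hb G hle).not_gt hG.2, hG.1⟩

/-- No graph parameter characterizes `G ALL`: for every parameter `lam` it fails that a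
class has a labeling scheme iff it is bounded by `lam`. -/
theorem stmt_10 (lam : UGraph → ℕ) :
    ¬ (∀ C : Set UGraph, InGALL C ↔ BoundedBy lam C) := by
  intro h
  have hunbounded : ¬ BoundedBy lam Set.univ := fun hb => not_inGALL_univ ((h _).2 hb)
  obtain ⟨q, hq⟩ := exists_seq_of_not_boundedBy_univ hunbounded
  obtain ⟨B, hB⟩ := (h _).1 (inGALL_range_of_lt_size q fun i => (hq i).1)
  exact (hq B).2.not_ge (hB _ ⟨B, rfl⟩)
end

section
/- G FO_qf(<) is closed under union: if graph classes C and D are each representable by quantifier-free {<,=}-formulas with 2k free variables (via labelings V → ℕ^k), then C ∪ D is representable by a quantifier-free {<,=}-formula with 2(k+1) free variables, namely χ(x₁,…,x_{k+1},y₁,…,y_{k+1}) = (x_{k+1} = y_{k+1} → φ(x₁,…,x_k,y₁,…,y_k)) ∧ (x_{k+1} ≠ y_{k+1} → ψ(x₁,…,x_k,y₁,…,y_k)). -/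
/-- Quantifier-free formulas over the signature `{<, =}` with variables `x₀, …, x_{m-1}`. -/
inductive QF : ℕ → Type
  | lt {m : ℕ} (i j : Fin m) : QF m
  | eq {m : ℕ} (i j : Fin m) : QF m
  | not {m : ℕ} (φ : QF m) : QF m
  | and {m : ℕ} (φ ψ : QF m) : QF m
  | or {m : ℕ} (φ ψ : QF m) : QF m

/-- Evaluation of a quantifier-free formula under an assignment of natural numbers. -/
def QF.eval : {m : ℕ} → QF m → (Fin m → ℕ) → Prop
  | _, .lt i j, a => a i < a j
  | _, .eq i j, a => a i = a j
  | _, .not φ, a => ¬ QF.eval φ a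
  | _, .and φ ψ, a => QF.eval φ a ∧ QF.eval ψ a
  | _, .or φ ψ, a => QF.eval φ a ∨ QF.eval ψ a

/-- Renaming of variables. -/
def QF.rename {m m' : ℕ} (f : Fin m → Fin m') : QF m → QF m'
  | .lt i j => .lt (f i) (f j)
  | .eq i j => .eq (f i) (f j)
  | .not φ => .not (φ.rename f)
  | .and φ ψ => .and (φ.rename f) (ψ.rename f)
  | .or φ ψ => .or (φ.rename f) (ψ.rename f)

/-- The class `C` is represented by the quantifier-free formula `φ ∈ FO_{2k}(<)` via
labelings `V → ℕᵏ`. -/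
def RepBy (k : ℕ) (φ : QF (k + k)) (C : Set UGraph) : Prop :=
  ∀ p ∈ C, ∃ ℓ : Fin p.1 → Fin k → ℕ, ∀ u v : Fin p.1, u ≠ v →
    (p.2.Adj u v ↔ QF.eval φ (Fin.append (ℓ u) (ℓ v)))

lemma QF.eval_rename {m m' : ℕ} (f : Fin m → Fin m') (φ : QF m) (a : Fin m' → ℕ) :
    QF.eval (φ.rename f) a ↔ QF.eval φ (a ∘ f) := by
  induction φ <;> simp [QF.rename, QF.eval, *]

lemma append_apply {m n : ℕ} (f : Fin m → ℕ) (g : Fin n → ℕ) (i : Fin (m + n)) :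
    Fin.append f g i = if h : (i : ℕ) < m then f ⟨i, h⟩ else g ⟨(i : ℕ) - m, by omega⟩ := by
  split
  · rename_i h
    have : i = Fin.castAdd n ⟨i, h⟩ := by ext; rfl
    conv_lhs => rw [this, Fin.append_left]
  · rename_i h
    have : i = Fin.natAdd m ⟨(i : ℕ) - m, by omega⟩ := by ext; simp; omega
    conv_lhs => rw [this, Fin.append_right]

/-- `G FO_qf(<)` is closed under union: if `C` is represented by `φ` and `D` by `ψ`
(each with `2k` free variables), then `C ∪ D` is represented by the formula
`χ = (x_{k+1} = y_{k+1} → φ) ∧ (x_{k+1} ≠ y_{k+1} → ψ)` with `2(k+1)` free variables. -/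
theorem stmt_15 (k : ℕ) (φ ψ : QF (k + k)) (C D : Set UGraph)
    (hC : RepBy k φ C) (hD : RepBy k ψ D) :
    let emb : Fin (k + k) → Fin ((k + 1) + (k + 1)) := fun i =>
      if (i : ℕ) < k then ⟨(i : ℕ), by omega⟩
      else ⟨(i : ℕ) + 1, by have := i.isLt; omega⟩
    let xk : Fin ((k + 1) + (k + 1)) := ⟨k, by omega⟩
    let yk : Fin ((k + 1) + (k + 1)) := ⟨(k + 1) + k, by omega⟩
    let χ : QF ((k + 1) + (k + 1)) :=
      QF.and (QF.or (QF.not (QF.eq xk yk)) (φ.rename emb))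
             (QF.or (QF.eq xk yk) (ψ.rename emb))
    RepBy (k + 1) χ (C ∪ D) := by
  intro emb xk yk χ p hp
  rcases hp with hp | hp
  · obtain ⟨ℓ, h⟩ := hC p hp
    refine ⟨fun u i => if h : (i : ℕ) < k then ℓ u ⟨i, h⟩ else 0, fun u v huv => ?_⟩
    set a := Fin.append (fun i => if h : (i : ℕ) < k then ℓ u ⟨i, h⟩ else 0)
      (fun i => if h : (i : ℕ) < k then ℓ v ⟨i, h⟩ else 0) with ha
    have hxk : a xk = a yk := by
      simp only [ha, append_apply, xk, yk]
      norm_num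
    have hcomp : a ∘ emb = Fin.append (ℓ u) (ℓ v) := by
      funext i
      simp only [Function.comp_apply, ha, emb, append_apply]
      by_cases hi : (i : ℕ) < k
      · simp [hi, Nat.lt_succ_of_lt hi]
      · have h1 : ¬ ((i : ℕ) + 1 < k + 1) := by omega
        have h2 : (i : ℕ) + 1 - (k + 1) = (i : ℕ) - k := by omega
        have h3 : (i : ℕ) - k < k := by have := i.isLt; omega
        simp [hi, h1, h2, h3]
    simp only [χ, QF.eval, QF.eval_rename, hcomp, hxk]
    rw [h u v huv]
    tauto
  · obtain ⟨ℓ, h⟩ := hD p hp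
    refine ⟨fun u i => if h : (i : ℕ) < k then ℓ u ⟨i, h⟩ else (u : ℕ), fun u v huv => ?_⟩
    set a := Fin.append (fun i => if h : (i : ℕ) < k then ℓ u ⟨i, h⟩ else (u : ℕ))
      (fun i => if h : (i : ℕ) < k then ℓ v ⟨i, h⟩ else (v : ℕ)) with ha
    have hxk : a xk ≠ a yk := by
      simp only [ha, append_apply, xk, yk]
      norm_num
      exact fun e => huv (Fin.val_injective e)
    have hcomp : a ∘ emb = Fin.append (ℓ u) (ℓ v) := by
      funext i
      simp only [Function.comp_apply, ha, emb, append_apply]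
      by_cases hi : (i : ℕ) < k
      · simp [hi, Nat.lt_succ_of_lt hi]
      · have h1 : ¬ ((i : ℕ) + 1 < k + 1) := by omega
        have h2 : (i : ℕ) + 1 - (k + 1) = (i : ℕ) - k := by omega
        have h3 : (i : ℕ) - k < k := by have := i.isLt; omega
        simp [hi, h1, h2, h3]
    simp only [χ, QF.eval, QF.eval_rename, hcomp]
    rw [h u v huv]
    tauto
end

section
/- For every satisfiable conjunction C of atomic formulas over {<, =} on variables x₁,…,x_{2k} there exists a k-DAG D = (X, E_D) such that for every vertex set V and every labeling ℓ : V → ℕ^k, the graph induced by C equals G_D^ℓ: take X to be the partition of [2k] into connected components of the equality graph (i, j adjacent iff C contains x_i = x_j), and put an edge from the part of i to the part of j whenever C contains x_i < x_j; satisfiability of C guarantees D is well-defined and acyclic. -/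
/-- A `k`-DAG: its vertex set is a partition of `[2k]` (modelled by an equivalence
relation `eqv` on `Fin (k+k)`) together with an acyclic edge relation between parts. -/
structure KDag (k : ℕ) where
  eqv : Setoid (Fin (k + k))
  edge : Fin (k + k) → Fin (k + k) → Prop
  resp : ∀ i i' j j', eqv.r i i' → eqv.r j j' → (edge i j ↔ edge i' j')
  acyclic : ∀ i j, Relation.TransGen edge i j → ¬ eqv.r i j

/-- The adjacency induced by a `k`-DAG `D` under a `k`-labeling `ℓ : V → ℕᵏ`. -/
def KDag.Adj {k : ℕ} (D : KDag k) {V : Type} (ℓ : V → Fin k → ℕ) (u v : V) : Prop :=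
  (∀ i j, D.eqv.r i j → Fin.append (ℓ u) (ℓ v) i = Fin.append (ℓ u) (ℓ v) j) ∧
  (∀ i j, D.edge i j → Fin.append (ℓ u) (ℓ v) i < Fin.append (ℓ u) (ℓ v) j)

private lemma eqvGen_eq {α : Type*} {r : α → α → Prop} {f : α → ℕ}
    (hf : ∀ i j, r i j → f i = f j) {i j : α} (h : Relation.EqvGen r i j) : f i = f j := by
  induction h with
  | rel a b hab => exact hf a b hab
  | refl => rfl
  | symm a b _ ih => exact ih.symm
  | trans a b c _ _ ih1 ih2 => exact ih1.trans ih2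

/-- Every satisfiable conjunction of atomic `{<, =}`-formulas on `x₁, …, x_{2k}` (given by
the sets `eqs` of equality atoms and `lts` of strict-order atoms) is equivalent to a
`k`-DAG: there is a `k`-DAG `D` such that for every vertex set `V` and `k`-labeling `ℓ`,
the graph induced by the conjunction equals `G_D^ℓ`. -/
theorem stmt_18 (k : ℕ) (eqs lts : Set (Fin (k + k) × Fin (k + k)))
    (hsat : ∃ x : Fin (k + k) → ℕ,
      (∀ p ∈ eqs, x p.1 = x p.2) ∧ (∀ p ∈ lts, x p.1 < x p.2)) :
    ∃ D : KDag k, ∀ (V : Type) (ℓ : V → Fin k → ℕ) (u v : V),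
      ((∀ p ∈ eqs, Fin.append (ℓ u) (ℓ v) p.1 = Fin.append (ℓ u) (ℓ v) p.2) ∧
       (∀ p ∈ lts, Fin.append (ℓ u) (ℓ v) p.1 < Fin.append (ℓ u) (ℓ v) p.2)) ↔
      D.Adj ℓ u v := by
  obtain ⟨x, hxe, hxl⟩ := hsat
  set E : Fin (k + k) → Fin (k + k) → Prop :=
    fun i j => Relation.EqvGen (fun a b => (a, b) ∈ eqs) i j with hE
  have hEeq : ∀ {i j}, E i j → x i = x j :=
    fun h => eqvGen_eq (fun a b hab => hxe (a, b) hab) h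
  set ed : Fin (k + k) → Fin (k + k) → Prop :=
    fun i j => ∃ p ∈ lts, E p.1 i ∧ E p.2 j with hed
  have hedlt : ∀ {i j}, ed i j → x i < x j := by
    rintro i j ⟨p, hp, h1, h2⟩
    have e1 := hEeq h1
    have e2 := hEeq h2
    have := hxl p hp
    omega
  refine ⟨⟨⟨E, Relation.EqvGen.is_equivalence _⟩, ed, ?_, ?_⟩, ?_⟩
  · rintro i i' j j' hii' hjj'
    constructor
    · rintro ⟨p, hp, h1, h2⟩
      exact ⟨p, hp, h1.trans _ _ _ hii', h2.trans _ _ _ hjj'⟩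
    · rintro ⟨p, hp, h1, h2⟩
      exact ⟨p, hp, h1.trans _ _ _ (hii'.symm _ _), h2.trans _ _ _ (hjj'.symm _ _)⟩
  · intro i j htg hij
    have hlt : x i < x j := by
      clear hij
      induction htg with
      | single h => exact hedlt h
      | tail _ h ih => exact ih.trans (hedlt h)
    have := hEeq hij
    omega
  · intro V ℓ u v
    constructor
    · rintro ⟨he, hl⟩
      refine ⟨fun i j hij => eqvGen_eq (fun a b hab => he (a, b) hab) hij, ?_⟩
      rintro i j ⟨p, hp, h1, h2⟩
      have e1 := eqvGen_eq (fun a b hab => he (a, b) hab) h1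
      have e2 := eqvGen_eq (fun a b hab => he (a, b) hab) h2
      have := hl p hp
      omega
    · rintro ⟨he, hl⟩
      refine ⟨fun p hp => he p.1 p.2 (Relation.EqvGen.rel _ _ hp), fun p hp => ?_⟩
      exact hl p.1 p.2 ⟨p, hp, Relation.EqvGen.refl _, Relation.EqvGen.refl _⟩
end

section
/- If the class G FO_qf(<) of graph classes representable by quantifier-free {<,=}-label decoders collapsed to a fixed level, i.e., if every representable class were representable with k numbers per vertex each at most n^k for one fixed k, then every class in G FO_qf(<) would contain at most 2^{k²·n·⌈log₂ n⌉} labeled graphs on n vertices — which fails since for every constant K, the union of all representable classes contains more than 2^{K n log n} labeled graphs on n vertices for large n. Hence for every k there is k' > k with G^{(k,k)} FO_qf(<) strictly contained in G^{(k',k')} FO_qf(<). -/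
/-- `G^{(c,k)} FO_qf(<)`: graph classes representable by a quantifier-free
`{<,=}`-formula with `2k` free variables via labelings assigning to each vertex `k`
numbers from `[n^c]`. -/
def GFOqf (c k : ℕ) : Set (Set UGraph) :=
  {C | ∃ φ : QF (k + k), ∀ p ∈ C, ∃ ℓ : Fin p.1 → Fin k → ℕ,
    (∀ (u : Fin p.1) (i : Fin k), 1 ≤ ℓ u i ∧ ℓ u i ≤ p.1 ^ c) ∧
    ∀ u v : Fin p.1, u ≠ v → (p.2.Adj u v ↔ QF.eval φ (Fin.append (ℓ u) (ℓ v)))}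

/-!
Padding labels with `1`s shows that the levels increase. For strictness we count: a graph
is determined by its labeling, so a class in `G^{(k,k)}` has at most `(N^k)^{kN}` graphs on
`N` vertices. On the other hand `d + 1` labels suffice for the bipartite graphs on two sides
of size `n = d m` in which left vertex `i` is joined to the right vertices `(j, h i j)`,
`j < d`, identifying the right side with `Fin d × Fin m`. These are `m^{d n}` distinct
graphs, and for `d = 2k² + 1` and `m > (2d)^{2k²}` this exceeds `(2n)^{2k² n}`.
-/

namespace QF

def rename_s19 : {m m' : ℕ} → (Fin m → Fin m') → QF m → QF m'
  | _, _, f, .lt i j => .lt (f i) (f j)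
  | _, _, f, .eq i j => .eq (f i) (f j)
  | _, _, f, .not φ => .not (rename_s19 f φ)
  | _, _, f, .and φ ψ => .and (rename_s19 f φ) (rename_s19 f ψ)
  | _, _, f, .or φ ψ => .or (rename_s19 f φ) (rename_s19 f ψ)

@[simp]
theorem eval_rename_s19 {m m' : ℕ} (f : Fin m → Fin m') (φ : QF m) (a : Fin m' → ℕ) :
    (φ.rename_s19 f).eval a ↔ φ.eval (a ∘ f) := by
  induction φ <;> simp [rename_s19, eval, *]

/-- `QF` has no constant `⊥`; the empty disjunction is `¬ x_{i₀} = x_{i₀}`. -/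
def finDisj {m : ℕ} (i₀ : Fin m) : (d : ℕ) → (Fin d → QF m) → QF m
  | 0, _ => .not (.eq i₀ i₀)
  | d + 1, f => .or (f 0) (finDisj i₀ d (f ∘ Fin.succ))

@[simp]
theorem eval_finDisj {m : ℕ} (i₀ : Fin m) (d : ℕ) (f : Fin d → QF m) (a : Fin m → ℕ) :
    (finDisj i₀ d f).eval a ↔ ∃ j, (f j).eval a := by
  induction d with
  | zero => simp [finDisj, eval]
  | succ d ih => simp [finDisj, eval, ih, Fin.exists_fin_succ]

def IsLabeling {k N : ℕ} (φ : QF (k + k)) (G : SimpleGraph (Fin N))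
    (ℓ : Fin N → Fin k → ℕ) : Prop :=
  ∀ u v, u ≠ v → (G.Adj u v ↔ φ.eval (Fin.append (ℓ u) (ℓ v)))

theorem IsLabeling.eq {k N : ℕ} {φ : QF (k + k)} {G H : SimpleGraph (Fin N)}
    {ℓ : Fin N → Fin k → ℕ} (hG : φ.IsLabeling G ℓ) (hH : φ.IsLabeling H ℓ) : G = H := by
  ext u v
  by_cases huv : u = v
  · simp [huv]
  · rw [hG u v huv, hH u v huv]

def decode {k N : ℕ} (φ : QF (k + k)) (ℓ : Fin N → Fin k → ℕ) : SimpleGraph (Fin N) :=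
  SimpleGraph.fromRel fun u v => φ.eval (Fin.append (ℓ u) (ℓ v))

theorem isLabeling_decode {k N : ℕ} {φ : QF (k + k)}
    (hφ : ∀ x y : Fin k → ℕ, φ.eval (Fin.append x y) ↔ φ.eval (Fin.append y x))
    (ℓ : Fin N → Fin k → ℕ) : φ.IsLabeling (φ.decode ℓ) ℓ := by
  intro u v huv
  simp [decode, huv, hφ (ℓ v)]

end QF

theorem GFOqf_mono {c k c' k' : ℕ} (hc : c ≤ c') (hk : k ≤ k') :
    GFOqf c k ⊆ GFOqf c' k' := by
  rintro C ⟨φ, hφ⟩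
  let σ : Fin (k + k) → Fin (k' + k') :=
    Fin.addCases (Fin.castAdd k' ∘ Fin.castLE hk) (Fin.natAdd k' ∘ Fin.castLE hk)
  refine ⟨φ.rename_s19 σ, fun p hp => ?_⟩
  obtain ⟨ℓ, hbound, hℓ⟩ := hφ p hp
  let pad : (Fin k → ℕ) → Fin k' → ℕ := fun x t => if h : t.val < k then x ⟨t, h⟩ else 1
  have hpad : ∀ x y, Fin.append (pad x) (pad y) ∘ σ = Fin.append x y := by
    intro x y
    funext s
    refine Fin.addCases (fun s => ?_) (fun s => ?_) s <;>
      simp only [σ, Fin.addCases_left, Fin.addCases_right, Function.comp_apply, Fin.append_left,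
        Fin.append_right] <;> simp [pad]
  refine ⟨fun u => pad (ℓ u), fun u t => ?_, fun u v huv => ?_⟩
  · have hN : 1 ≤ p.1 := Nat.one_le_iff_ne_zero.2 (Fin.pos u).ne'
    by_cases ht : t.val < k
    · obtain ⟨h1, h2⟩ := hbound u ⟨t, ht⟩
      simpa [pad, ht] using ⟨h1, h2.trans (Nat.pow_le_pow_right hN hc)⟩
    · simpa [pad, ht] using Nat.one_le_pow _ _ hN
  · rw [hℓ u v huv, QF.eval_rename_s19, hpad]

def graphsOfOrder (C : Set UGraph) (N : ℕ) : Set (SimpleGraph (Fin N)) := {G | ⟨N, G⟩ ∈ C}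

theorem ncard_graphsOfOrder_le {c k : ℕ} {C : Set UGraph} (hC : C ∈ GFOqf c k) (N : ℕ) :
    (graphsOfOrder C N).ncard ≤ ((N ^ c) ^ k) ^ N := by
  obtain ⟨φ, hφ⟩ := hC
  have hlabeled : ∀ G : graphsOfOrder C N, ∃ ℓ : Fin N → Fin k → ℕ,
      (∀ u i, 1 ≤ ℓ u i ∧ ℓ u i ≤ N ^ c) ∧ φ.IsLabeling G ℓ := fun G => hφ ⟨N, G⟩ G.2
  choose ℓ hbound hℓ using hlabeled
  let code : graphsOfOrder C N → Fin N → Fin k → Fin (N ^ c) := fun G u i =>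
    ⟨ℓ G u i - 1, by have := hbound G u i; omega⟩
  have hcode : Function.Injective code := by
    intro G H hGH
    have hlabel : ℓ G = ℓ H := by
      funext u i
      have h := congrArg Fin.val (congrFun (congrFun hGH u) i)
      have := hbound G u i
      have := hbound H u i
      simp only [code] at h
      omega
    exact Subtype.ext (QF.IsLabeling.eq (hℓ G) (hlabel ▸ hℓ H))
  calc (graphsOfOrder C N).ncard
      = Nat.card (graphsOfOrder C N) := (Nat.card_coe_set_eq _).symm
    _ ≤ Nat.card (Fin N → Fin k → Fin (N ^ c)) := Nat.card_le_card_of_injective code hcode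
    _ = ((N ^ c) ^ k) ^ N := by simp

def sepFormula (d : ℕ) : QF ((d + 1) + (d + 1)) :=
  .and (.not (.eq (Fin.castAdd _ 0) (Fin.natAdd _ 0)))
    (QF.finDisj (Fin.castAdd _ 0) d fun j => .eq (Fin.castAdd _ j.succ) (Fin.natAdd _ j.succ))

theorem eval_sepFormula {d : ℕ} (x y : Fin (d + 1) → ℕ) :
    (sepFormula d).eval (Fin.append x y) ↔ x 0 ≠ y 0 ∧ ∃ j : Fin d, x j.succ = y j.succ := by
  simp only [sepFormula, QF.eval, QF.eval_finDisj, Fin.append_left, Fin.append_right]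

theorem isLabeling_decode_sepFormula {d N : ℕ} (ℓ : Fin N → Fin (d + 1) → ℕ) :
    (sepFormula d).IsLabeling ((sepFormula d).decode ℓ) ℓ :=
  QF.isLabeling_decode (fun x y => by simp only [eval_sepFormula, ne_comm, eq_comm]) ℓ

def sepClass (d : ℕ) : Set UGraph :=
  {p | ∃ ℓ : Fin p.1 → Fin (d + 1) → ℕ,
    (∀ u i, 1 ≤ ℓ u i ∧ ℓ u i ≤ p.1) ∧ p.2 = (sepFormula d).decode ℓ}

theorem sepClass_mem_GFOqf (d : ℕ) : sepClass d ∈ GFOqf 1 (d + 1) := by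
  refine ⟨sepFormula d, ?_⟩
  rintro p ⟨ℓ, hbound, hp⟩
  refine ⟨ℓ, by simpa using hbound, ?_⟩
  rw [hp]
  exact isLabeling_decode_sepFormula ℓ

/-- Left vertex `i` gets labels `1, (0, h i 0), …, (d-1, h i (d-1))` and right vertex
`a ≅ (j, b) ∈ Fin d × Fin m` gets `2, a, …, a` (shifted by one), so `i` is joined exactly
to the right vertices `(j, h i j)`. -/
def sepLabeling {d m : ℕ} (h : Fin (d * m) → Fin d → Fin m) :
    Fin (d * m + d * m) → Fin (d + 1) → ℕ :=
  Fin.append (fun i => Fin.cons 1 fun j => (finProdFinEquiv (j, h i j) : ℕ) + 1)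
    (fun a => Fin.cons 2 fun _ => (a : ℕ) + 1)

theorem decode_sepLabeling_mem_sepClass {d m : ℕ} (h : Fin (d * m) → Fin d → Fin m) :
    ⟨_, (sepFormula d).decode (sepLabeling h)⟩ ∈ sepClass d := by
  refine ⟨sepLabeling h, fun u t => ?_, rfl⟩
  have hpos : 0 < d * m + d * m := u.pos
  refine Fin.addCases (fun i => ?_) (fun a => ?_) u <;> refine Fin.cases ?_ (fun j => ?_) t <;>
    simp only [sepLabeling, Fin.append_left, Fin.append_right, Fin.cons_zero, Fin.cons_succ]
  · omega
  · have := (finProdFinEquiv (j, h i j)).isLt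
    omega
  · omega
  · have := a.isLt
    omega

theorem decode_sepLabeling_adj {d m : ℕ} (h : Fin (d * m) → Fin d → Fin m) (i a : Fin (d * m)) :
    ((sepFormula d).decode (sepLabeling h)).Adj (Fin.castAdd _ i) (Fin.natAdd _ a) ↔
      ∃ j, finProdFinEquiv (j, h i j) = a := by
  have hne : Fin.castAdd (d * m) i ≠ Fin.natAdd (d * m) a := by
    simp only [ne_eq, Fin.ext_iff, Fin.val_castAdd, Fin.val_natAdd]
    omega
  rw [isLabeling_decode_sepFormula _ _ _ hne, eval_sepFormula]
  simp only [sepLabeling, Fin.append_left, Fin.append_right, Fin.cons_zero, Fin.cons_succ]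
  simp [Fin.ext_iff]

theorem decode_sepLabeling_injective (d m : ℕ) :
    Function.Injective fun h : Fin (d * m) → Fin d → Fin m =>
      (sepFormula d).decode (sepLabeling h) := by
  intro h₁ h₂ hdecode
  dsimp only at hdecode
  funext i j
  have hadj := (decode_sepLabeling_adj h₁ i _).2 ⟨j, rfl⟩
  rw [hdecode, decode_sepLabeling_adj] at hadj
  obtain ⟨j', hj'⟩ := hadj
  obtain ⟨rfl, hb⟩ := Prod.mk.inj (finProdFinEquiv.injective hj')
  exact hb.symm

theorem le_ncard_graphsOfOrder_sepClass (d m : ℕ) :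
    (m ^ d) ^ (d * m) ≤ (graphsOfOrder (sepClass d) (d * m + d * m)).ncard := by
  calc (m ^ d) ^ (d * m) = Nat.card (Fin (d * m) → Fin d → Fin m) := by simp
    _ = (Set.range fun h : Fin (d * m) → Fin d → Fin m =>
          (sepFormula d).decode (sepLabeling h)).ncard :=
        (Set.ncard_range_of_injective (decode_sepLabeling_injective d m)).symm
    _ ≤ (graphsOfOrder (sepClass d) (d * m + d * m)).ncard := by
        refine Set.ncard_le_ncard ?_
        rintro _ ⟨h, rfl⟩
        exact decode_sepLabeling_mem_sepClass h

theorem card_labelings_lt_card_sepGraphs {k d m : ℕ} (hd : 2 * k ^ 2 < d)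
    (hm : (2 * d) ^ (2 * k ^ 2) < m) :
    (((d * m + d * m) ^ k) ^ k) ^ (d * m + d * m) < (m ^ d) ^ (d * m) := by
  have hm0 : 0 < m := by omega
  have hbase : (d * m + d * m) ^ (2 * k ^ 2) < m ^ d :=
    calc (d * m + d * m) ^ (2 * k ^ 2) = (2 * d) ^ (2 * k ^ 2) * m ^ (2 * k ^ 2) := by
          rw [← mul_pow]; ring_nf
      _ < m * m ^ (2 * k ^ 2) := Nat.mul_lt_mul_of_pos_right hm (by positivity)
      _ = m ^ (2 * k ^ 2 + 1) := (pow_succ' m _).symm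
      _ ≤ m ^ d := Nat.pow_le_pow_right hm0 hd
  calc (((d * m + d * m) ^ k) ^ k) ^ (d * m + d * m)
      = ((d * m + d * m) ^ (2 * k ^ 2)) ^ (d * m) := by
        rw [← pow_mul, ← pow_mul, ← pow_mul]; ring_nf
    _ < (m ^ d) ^ (d * m) := Nat.pow_lt_pow_left hbase (Nat.mul_pos (by omega) hm0).ne'

theorem sepClass_not_mem_GFOqf (k : ℕ) : sepClass (2 * k ^ 2 + 1) ∉ GFOqf k k := by
  intro hmem
  set d := 2 * k ^ 2 + 1
  set m := (2 * d) ^ (2 * k ^ 2) + 1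
  have hcount := (le_ncard_graphsOfOrder_sepClass d m).trans (ncard_graphsOfOrder_le hmem _)
  exact (card_labelings_lt_card_sepGraphs (k := k) (by omega) (by omega)).not_ge hcount

/-- The hierarchy of quantifier-free `FO(<)` labeling schemes does not collapse: for
every `k` there is `k' > k` such that `G^{(k,k)} FO_qf(<)` is strictly contained in
`G^{(k',k')} FO_qf(<)`. -/
theorem stmt_19 :
    ∀ k : ℕ, ∃ k' : ℕ, k < k' ∧ GFOqf k k ⊆ GFOqf k' k' ∧ GFOqf k k ≠ GFOqf k' k' := by
  intro k
  have hk : k < 2 * k ^ 2 + 2 := by nlinarith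
  refine ⟨2 * k ^ 2 + 2, hk, GFOqf_mono hk.le hk.le, fun heq => sepClass_not_mem_GFOqf k ?_⟩
  rw [heq]
  exact GFOqf_mono (by omega) le_rfl (sepClass_mem_GFOqf _)
end
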